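/- arXiv:2012.15248 — 3 statements merged into one kernel-verified Lean document; each statement's English description precedes it below -/
import Mathlib

section
/- Let d ≥ 1 and K, G > 0. For every symmetric real d×d matrix E, the value φ(E) := (K/2)·(tr E)² + G·‖dev E‖² is the greatest element of the set { S : E − φ*(S) | S a symmetric real d×d matrix }, where φ*(S) := (tr S)²/(2d²K) + ‖dev S‖²/(4G); i.e., the convex conjugate of the isotropic stress-stored energy φ* over symmetric matrices equals the strain-stored energy φ, the supremum being attained at S = K·(tr E)·I + 2G·dev E. -/
open Matrix

/-- Spherical part `sph A = ((tr A)/d) • I`. -/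
noncomputable def sph {d : ℕ} (A : Matrix (Fin d) (Fin d) ℝ) : Matrix (Fin d) (Fin d) ℝ :=
  (Matrix.trace A / (d : ℝ)) • (1 : Matrix (Fin d) (Fin d) ℝ)

/-- Deviatoric part `dev A = A - sph A`. -/
noncomputable def dev {d : ℕ} (A : Matrix (Fin d) (Fin d) ℝ) : Matrix (Fin d) (Fin d) ℝ :=
  A - sph A

/-- Frobenius inner product `A : B = tr(Aᵀ B)`. -/
noncomputable def finner {d : ℕ} (A B : Matrix (Fin d) (Fin d) ℝ) : ℝ :=
  Matrix.trace (Aᵀ * B)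

/-- Strain-stored energy `φ(E) = (K/2)(tr E)² + G ‖dev E‖²`. -/
noncomputable def phiStrain {d : ℕ} (K G : ℝ) (E : Matrix (Fin d) (Fin d) ℝ) : ℝ :=
  K / 2 * (Matrix.trace E) ^ 2 + G * finner (dev E) (dev E)

/-- Stress-stored energy `φ*(S) = (tr S)²/(2d²K) + ‖dev S‖²/(4G)`. -/
noncomputable def phiStress {d : ℕ} (K G : ℝ) (S : Matrix (Fin d) (Fin d) ℝ) : ℝ :=
  (Matrix.trace S) ^ 2 / (2 * (d : ℝ) ^ 2 * K) + finner (dev S) (dev S) / (4 * G)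

/-! Fenchel–Young with an explicit gap: splitting `S : E` into spherical and deviatoric parts,
`φ(E) - (S : E - φ*(S))` is a sum of the two squares `(tr S - d K tr E)² / (2 d² K)` and
`‖dev S - 2G dev E‖² / (4G)`. It is therefore nonnegative, and it vanishes at
`S = K (tr E) I + 2G dev E`, whose trace and deviatoric part are exactly `d K tr E` and `2G dev E`. -/

section Frobenius

variable {d : ℕ}

lemma finner_comm (A B : Matrix (Fin d) (Fin d) ℝ) : finner A B = finner B A := by
  rw [finner, ← trace_transpose, transpose_mul, transpose_transpose, finner]

lemma finner_add_left (A B C : Matrix (Fin d) (Fin d) ℝ) :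
    finner (A + B) C = finner A C + finner B C := by
  simp [finner, add_mul, trace_add]

lemma finner_add_right (A B C : Matrix (Fin d) (Fin d) ℝ) :
    finner A (B + C) = finner A B + finner A C := by
  simp [finner, mul_add, trace_add]

lemma finner_sub_left (A B C : Matrix (Fin d) (Fin d) ℝ) :
    finner (A - B) C = finner A C - finner B C := by
  simp [finner, sub_mul, trace_sub]

lemma finner_sub_right (A B C : Matrix (Fin d) (Fin d) ℝ) :
    finner A (B - C) = finner A B - finner A C := by
  simp [finner, mul_sub, trace_sub]

lemma finner_smul_left (c : ℝ) (A B : Matrix (Fin d) (Fin d) ℝ) :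
    finner (c • A) B = c * finner A B := by
  simp [finner, trace_smul]

lemma finner_smul_right (c : ℝ) (A B : Matrix (Fin d) (Fin d) ℝ) :
    finner A (c • B) = c * finner A B := by
  simp [finner, trace_smul]

lemma finner_one_left (A : Matrix (Fin d) (Fin d) ℝ) : finner 1 A = trace A := by
  simp [finner]

lemma finner_one_right (A : Matrix (Fin d) (Fin d) ℝ) : finner A 1 = trace A := by
  simp [finner]

lemma finner_self_nonneg (A : Matrix (Fin d) (Fin d) ℝ) : 0 ≤ finner A A := by
  simpa [finner, conjTranspose_eq_transpose_of_trivial] using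
    (posSemidef_conjTranspose_mul_self A).trace_nonneg

end Frobenius

section Deviatoric

variable {d : ℕ}

lemma transpose_dev (A : Matrix (Fin d) (Fin d) ℝ) : (dev A)ᵀ = dev Aᵀ := by
  simp [dev, sph]

lemma trace_dev (hd : (d : ℝ) ≠ 0) (A : Matrix (Fin d) (Fin d) ℝ) : trace (dev A) = 0 := by
  simp [dev, sph, trace_sub, trace_smul, div_mul_cancel₀ _ hd]

lemma finner_eq_trace_mul_trace_div_add_finner_dev (hd : (d : ℝ) ≠ 0)
    (S E : Matrix (Fin d) (Fin d) ℝ) :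
    finner S E = trace S * trace E / d + finner (dev S) (dev E) := by
  have hsplit : ∀ A : Matrix (Fin d) (Fin d) ℝ, A = (trace A / d) • 1 + dev A := fun A => by
    simp [dev, sph]
  conv_lhs => rw [hsplit S, hsplit E]
  simp only [finner_add_left, finner_add_right, finner_smul_left, finner_smul_right,
    finner_one_left, finner_one_right, trace_add, trace_smul, trace_one, trace_dev hd,
    Fintype.card_fin, smul_eq_mul]
  field_simp
  ring

lemma trace_smul_one_add_smul_dev (hd : (d : ℝ) ≠ 0) (a b : ℝ) (A : Matrix (Fin d) (Fin d) ℝ) :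
    trace (a • 1 + b • dev A) = d * a := by
  simp [trace_add, trace_smul, trace_dev hd, mul_comm]

lemma dev_smul_one_add_smul_dev (hd : (d : ℝ) ≠ 0) (a b : ℝ) (A : Matrix (Fin d) (Fin d) ℝ) :
    dev (a • 1 + b • dev A) = b • dev A := by
  rw [dev, sph, trace_smul_one_add_smul_dev hd, mul_div_cancel_left₀ _ hd, add_sub_cancel_left]

end Deviatoric

lemma phiStrain_sub_conjugate_eq {d : ℕ} (hd : (d : ℝ) ≠ 0) {K G : ℝ} (hK : K ≠ 0) (hG : G ≠ 0)
    (S E : Matrix (Fin d) (Fin d) ℝ) :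
    phiStrain K G E - (finner S E - phiStress K G S) =
      (trace S - d * K * trace E) ^ 2 / (2 * d ^ 2 * K) +
        finner (dev S - (2 * G) • dev E) (dev S - (2 * G) • dev E) / (4 * G) := by
  rw [phiStrain, phiStress, finner_eq_trace_mul_trace_div_add_finner_dev hd S E]
  simp only [finner_sub_left, finner_sub_right, finner_smul_left, finner_smul_right,
    finner_comm (dev E) (dev S)]
  field_simp
  ring

/-- The convex conjugate of the isotropic stress-stored energy `φ*` over symmetric
matrices equals the strain-stored energy `φ`: `φ(E)` is the greatest element of
`{ S : E − φ*(S) | S symmetric }`, the supremum being attained at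
`S = K (tr E) I + 2G dev E`. -/
theorem phiStrain_isGreatest_conjugate {d : ℕ} (hd : 1 ≤ d) (K G : ℝ)
    (hK : 0 < K) (hG : 0 < G) (E : Matrix (Fin d) (Fin d) ℝ) (hE : Eᵀ = E) :
    IsGreatest {x : ℝ | ∃ S : Matrix (Fin d) (Fin d) ℝ, Sᵀ = S ∧
        x = finner S E - phiStress K G S} (phiStrain K G E) ∧
    finner ((K * Matrix.trace E) • (1 : Matrix (Fin d) (Fin d) ℝ) + (2 * G) • dev E) E
        - phiStress K G ((K * Matrix.trace E) • (1 : Matrix (Fin d) (Fin d) ℝ) + (2 * G) • dev E)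
      = phiStrain K G E := by
  have hd0 : (d : ℝ) ≠ 0 := Nat.cast_ne_zero.2 (by omega)
  have hgap := phiStrain_sub_conjugate_eq hd0 hK.ne' hG.ne'
  set S₀ := (K * trace E) • (1 : Matrix (Fin d) (Fin d) ℝ) + (2 * G) • dev E
  have hattain : finner S₀ E - phiStress K G S₀ = phiStrain K G E := by
    have h := hgap S₀ E
    rw [trace_smul_one_add_smul_dev hd0, dev_smul_one_add_smul_dev hd0, ← mul_assoc, sub_self,
      sub_self, show finner (0 : Matrix (Fin d) (Fin d) ℝ) 0 = 0 by simp [finner]] at h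
    simp only [zero_pow two_ne_zero, zero_div, add_zero, sub_eq_zero] at h
    exact h.symm
  refine ⟨⟨⟨S₀, by simp [S₀, transpose_dev, hE], hattain.symm⟩, ?_⟩, hattain⟩
  rintro _ ⟨S, -, rfl⟩
  suffices 0 ≤ phiStrain K G E - (finner S E - phiStress K G S) by linarith
  rw [hgap]
  exact add_nonneg (by positivity) (div_nonneg (finner_self_nonneg _) (by positivity))
end

section
/- Let E be a real inner product space and σ ≥ 1 a real number. Then for all a, b ∈ E: (‖a‖^σ − ‖b‖^σ)/σ ≤ ‖a‖^(σ−2) · ⟨a, a − b⟩, where for a = 0 and σ ≠ 2 the right-hand side is interpreted as 0 (real powers 0^(σ−2) taken in the rpow convention). (This is the convexity inequality used to test the discrete transport equations by |A|^{σ−2}A.) -/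
/-! The function `t ↦ t ^ σ` is convex on `[0, ∞)` for `σ ≥ 1`, so it lies above its tangent
at `‖a‖`: `‖b‖ ^ σ ≥ ‖a‖ ^ σ + σ ‖a‖ ^ (σ - 1) (‖b‖ - ‖a‖)`. Cauchy–Schwarz then gives
`‖a‖ (‖a‖ - ‖b‖) ≤ ⟪a, a - b⟫`, and multiplying by `‖a‖ ^ (σ - 2) ≥ 0` closes the argument. -/

open Real RealInnerProductSpace

namespace Real

/-- Bernoulli's inequality `(1 + s) ^ σ ≥ 1 + σ s`, rescaled by `s = y / x - 1`. -/
theorem rpow_add_mul_rpow_sub_one_mul_sub_le {σ x y : ℝ} (hσ : 1 ≤ σ) (hx : 0 < x)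
    (hy : 0 ≤ y) : x ^ σ + σ * (x ^ (σ - 1) * (y - x)) ≤ y ^ σ := by
  have hs : -1 ≤ y / x - 1 := by linarith [div_nonneg hy hx.le]
  have bernoulli := one_add_mul_self_le_rpow_one_add hs hσ
  rw [add_sub_cancel] at bernoulli
  calc x ^ σ + σ * (x ^ (σ - 1) * (y - x))
      = x ^ σ * (1 + σ * (y / x - 1)) := by
        rw [rpow_sub_one hx.ne']
        field_simp
    _ ≤ x ^ σ * (y / x) ^ σ := mul_le_mul_of_nonneg_left bernoulli (rpow_nonneg hx.le σ)
    _ = y ^ σ := by rw [← mul_rpow hx.le (div_nonneg hy hx.le), mul_div_cancel₀ _ hx.ne']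

theorem rpow_sub_rpow_div_le {σ x y : ℝ} (hσ : 1 ≤ σ) (hx : 0 < x) (hy : 0 ≤ y) :
    (x ^ σ - y ^ σ) / σ ≤ x ^ (σ - 1) * (x - y) := by
  rw [div_le_iff₀ (by linarith)]
  linarith [rpow_add_mul_rpow_sub_one_mul_sub_le hσ hx hy]

end Real

theorem norm_mul_sub_norm_le_inner {E : Type*} [NormedAddCommGroup E] [InnerProductSpace ℝ E]
    (a b : E) : ‖a‖ * (‖a‖ - ‖b‖) ≤ ⟪a, a - b⟫ := by
  rw [inner_sub_right, real_inner_self_eq_norm_mul_norm]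
  linarith [real_inner_le_norm a b]

/-- Convexity inequality used to test the discrete transport equations by `|A|^{σ−2}A`:
in a real inner product space, `(‖a‖^σ − ‖b‖^σ)/σ ≤ ‖a‖^(σ−2) ⟨a, a − b⟩` for `σ ≥ 1`
(real powers taken in the `rpow` convention, so the right-hand side is `0` for `a = 0`). -/
theorem norm_rpow_convexity_inequality
    {E : Type*} [NormedAddCommGroup E] [InnerProductSpace ℝ E]
    (σ : ℝ) (hσ : 1 ≤ σ) (a b : E) :
    (‖a‖ ^ σ - ‖b‖ ^ σ) / σ ≤ ‖a‖ ^ (σ - 2) * (inner ℝ a (a - b) : ℝ) := by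
  have hσ0 : 0 < σ := by linarith
  rcases eq_or_ne a 0 with rfl | ha
  · rw [norm_zero, zero_rpow hσ0.ne', inner_zero_left, mul_zero]
    exact div_nonpos_of_nonpos_of_nonneg (by linarith [rpow_nonneg (norm_nonneg b) σ]) hσ0.le
  have hx : 0 < ‖a‖ := norm_pos_iff.mpr ha
  calc (‖a‖ ^ σ - ‖b‖ ^ σ) / σ ≤ ‖a‖ ^ (σ - 1) * (‖a‖ - ‖b‖) :=
        rpow_sub_rpow_div_le hσ hx (norm_nonneg b)
    _ = ‖a‖ ^ (σ - 2) * (‖a‖ * (‖a‖ - ‖b‖)) := by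
        rw [show σ - 1 = σ - 2 + 1 by ring, rpow_add_one hx.ne']
        ring
    _ ≤ ‖a‖ ^ (σ - 2) * ⟪a, a - b⟫ :=
        mul_le_mul_of_nonneg_left (norm_mul_sub_norm_le_inner a b) (rpow_nonneg hx.le _)
end

section
/- Pointwise gradient-transport identity: let d ≥ 1, q > 1 a real number, x ∈ ℝ^d, let v : ℝ^d → ℝ^d be differentiable at x, and let z : ℝ^d → ℝ be twice continuously differentiable on a neighborhood of x with ∇z(x) ≠ 0. Then the map y ↦ (1/q)·‖∇z(y)‖^q · v(y) is differentiable at x and ⟨∇g(x), ∇z(x)⟩·‖∇z(x)‖^(q−2) = ‖∇z(x)‖^(q−2)·⟨(Dv(x))(∇z(x)), ∇z(x)⟩ + div(y ↦ (1/q)·‖∇z(y)‖^q·v(y))(x) − (1/q)·‖∇z(x)‖^q·div v(x), where g : y ↦ ⟨v(y), ∇z(y)⟩. -/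
/-! Let `u = ∇z(x)`, let `H` be the Hessian of `z` at `x`, seen as an operator, and let
`φ = ‖∇z‖^q / q`. The chain rule gives `Dφ(x) w = ‖u‖^(q-2) ⟪u, H w⟫` and
`⟪∇g(x), u⟫ = ⟪Dv(x) u, u⟫ + ⟪v(x), H u⟫`, and the product rule gives
`div(φ v) = φ div v + Dφ(v)`. After these substitutions the identity is the symmetry
`⟪v(x), H u⟫ = ⟪u, H v(x)⟫` of the Hessian. -/

open scoped RealInnerProductSpace

/-- The divergence of a vector field `F : ℝ^d → ℝ^d` at `x`: the trace of its Fréchet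
derivative at `x`. -/
noncomputable def diverg {d : ℕ} (F : EuclideanSpace ℝ (Fin d) → EuclideanSpace ℝ (Fin d))
    (x : EuclideanSpace ℝ (Fin d)) : ℝ :=
  LinearMap.trace ℝ (EuclideanSpace ℝ (Fin d)) (fderiv ℝ F x).toLinearMap

open InnerProductSpace

theorem ContDiffAt.exists_hasFDerivAt_gradient_isSymmetric {E : Type*} [NormedAddCommGroup E]
    [InnerProductSpace ℝ E] [CompleteSpace E] {f : E → ℝ} {x : E} (hf : ContDiffAt ℝ 2 f x) :
    ∃ H : E →L[ℝ] E, HasFDerivAt (gradient f) H x ∧ (H : E →ₗ[ℝ] E).IsSymmetric := by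
  let toPrimal : StrongDual ℝ E →L[ℝ] E :=
    (toDual ℝ E).symm.toContinuousLinearEquiv.toContinuousLinearMap
  have hf' : HasFDerivAt (fderiv ℝ f) (fderiv ℝ (fderiv ℝ f) x) x :=
    ((hf.fderiv_right (m := 1) (by norm_num)).differentiableAt one_ne_zero).hasFDerivAt
  refine ⟨toPrimal.comp (fderiv ℝ (fderiv ℝ f) x), toPrimal.hasFDerivAt.comp x hf', ?_⟩
  intro a b
  have hsymm := hf.isSymmSndFDerivAt (by simp [minSmoothness_of_isRCLikeNormedField]) b a
  change ⟪(toDual ℝ E).symm _, b⟫ = ⟪a, (toDual ℝ E).symm _⟫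
  rw [toDual_symm_apply, real_inner_comm, toDual_symm_apply]
  exact hsymm.symm

theorem diverg_smul {d : ℕ} {φ : EuclideanSpace ℝ (Fin d) → ℝ}
    {v : EuclideanSpace ℝ (Fin d) → EuclideanSpace ℝ (Fin d)} {x : EuclideanSpace ℝ (Fin d)}
    {φ' : StrongDual ℝ (EuclideanSpace ℝ (Fin d))}
    (hφ : HasFDerivAt φ φ' x) (hv : DifferentiableAt ℝ v x) :
    diverg (fun y => φ y • v y) x = φ x * diverg v x + φ' (v x) := by
  have hφv : HasFDerivAt (fun y => φ y • v y) (φ x • fderiv ℝ v x + φ'.smulRight (v x)) x :=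
    hφ.smul hv.hasFDerivAt
  rw [diverg, hφv.fderiv, ContinuousLinearMap.toLinearMap_add,
    ContinuousLinearMap.toLinearMap_smul, map_add, map_smul, ContinuousLinearMap.coe_smulRight,
    LinearMap.trace_smulRight, diverg, smul_eq_mul]
  rfl

theorem gradient_transport_identity_general {d : ℕ} (q : ℝ) (hq : 1 < q)
    (x : EuclideanSpace ℝ (Fin d))
    (v : EuclideanSpace ℝ (Fin d) → EuclideanSpace ℝ (Fin d))
    (z : EuclideanSpace ℝ (Fin d) → ℝ)
    (hv : DifferentiableAt ℝ v x) (hz : ContDiffAt ℝ 2 z x) :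
    DifferentiableAt ℝ (fun y => (1 / q * ‖gradient z y‖ ^ q) • v y) x ∧
    ⟪gradient (fun y => ⟪v y, gradient z y⟫) x, gradient z x⟫ * ‖gradient z x‖ ^ (q - 2)
      = ‖gradient z x‖ ^ (q - 2) * ⟪fderiv ℝ v x (gradient z x), gradient z x⟫
        + diverg (fun y => (1 / q * ‖gradient z y‖ ^ q) • v y) x
        - 1 / q * ‖gradient z x‖ ^ q * diverg v x := by
  obtain ⟨H, hH, hH_symm⟩ := hz.exists_hasFDerivAt_gradient_isSymmetric
  set u := gradient z x
  have hφ : HasFDerivAt (fun y => 1 / q * ‖gradient z y‖ ^ q)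
      ((1 / q) • (q * ‖u‖ ^ (q - 2)) • (innerSL ℝ u).comp H) x :=
    ((hasFDerivAt_norm_rpow u hq).comp x hH).const_mul (1 / q)
  have hg : HasFDerivAt (fun y => ⟪v y, gradient z y⟫)
      ((fderivInnerCLM ℝ (v x, u)).comp ((fderiv ℝ v x).prod H)) x :=
    hv.hasFDerivAt.inner ℝ hH
  refine ⟨hφ.differentiableAt.smul hv, ?_⟩
  rw [diverg_smul hφ hv, inner_gradient_left, hg.fderiv]
  have hq0 : q ≠ 0 := by linarith
  have hH_swap : ⟪v x, H u⟫ = ⟪u, H (v x)⟫ := by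
    rw [real_inner_comm]; exact hH_symm u (v x)
  simp only [ContinuousLinearMap.comp_apply, ContinuousLinearMap.prod_apply, fderivInnerCLM_apply,
    hH_swap, one_div, smul_apply, coe_innerSL_apply, smul_eq_mul]
  field_simp
  ring

/-- Pointwise gradient-transport identity: for `q > 1`, `v` differentiable at `x`, `z`
twice continuously differentiable near `x` with `∇z(x) ≠ 0`, the map
`y ↦ (1/q)‖∇z(y)‖^q v(y)` is differentiable at `x` and, with `g : y ↦ ⟨v(y), ∇z(y)⟩`,
`⟨∇g(x), ∇z(x)⟩ ‖∇z(x)‖^(q−2) = ‖∇z(x)‖^(q−2) ⟨Dv(x)(∇z(x)), ∇z(x)⟩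
  + div(y ↦ (1/q)‖∇z(y)‖^q v(y))(x) − (1/q)‖∇z(x)‖^q div v(x)`. -/
theorem gradient_transport_identity {d : ℕ} (hd : 1 ≤ d) (q : ℝ) (hq : 1 < q)
    (x : EuclideanSpace ℝ (Fin d))
    (v : EuclideanSpace ℝ (Fin d) → EuclideanSpace ℝ (Fin d))
    (z : EuclideanSpace ℝ (Fin d) → ℝ)
    (hv : DifferentiableAt ℝ v x) (hz : ContDiffAt ℝ 2 z x)
    (hgrad : gradient z x ≠ 0) :
    DifferentiableAt ℝ (fun y => (1 / q * ‖gradient z y‖ ^ q) • v y) x ∧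
    ⟪gradient (fun y => ⟪v y, gradient z y⟫) x, gradient z x⟫ * ‖gradient z x‖ ^ (q - 2)
      = ‖gradient z x‖ ^ (q - 2) * ⟪fderiv ℝ v x (gradient z x), gradient z x⟫
        + diverg (fun y => (1 / q * ‖gradient z y‖ ^ q) • v y) x
        - 1 / q * ‖gradient z x‖ ^ q * diverg v x :=
  gradient_transport_identity_general q hq x v z hv hz
end
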